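/- arXiv:1604.02682 — 4 statements merged into one kernel-verified Lean document; each statement's English description precedes it below -/
import Mathlib

section
/- Let A ∈ B(X), B ∈ B(Y,X) with R(A) + R(B) = X. Then X decomposes as X = (R(A)^⊥ ∔ R(B)^⊥) ⊕ (closure(R(A)) ∩ closure(R(B))), where ∔ denotes a direct (not necessarily orthogonal) sum: that is, R(A)^⊥ ∩ R(B)^⊥ = {0}, the sum R(A)^⊥ + R(B)^⊥ is closed, and its orthogonal complement equals closure(R(A)) ∩ closure(R(B)). -/
/-!
Let `K`, `L` be the closures of `R(A)`, `R(B)` and `W = K ⊓ L`. Since `K ⊔ L = ⊤`, the closed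
subspace `Wᗮ ⊓ K` is a complement of `L`, so the projection `Q` onto `L` along it is bounded. It
fixes `L` and maps `K` into `W`; hence for `z ⊥ W` the splitting `z = Q† z + (z - Q† z)` puts `z`
in `R(A)ᗮ + R(B)ᗮ`. That sum is therefore `Wᗮ`, which is closed; the other two claims are lattice
identities for orthogonal complements.
-/

namespace Submodule

variable {𝕜 E : Type*} [RCLike 𝕜] [NormedAddCommGroup E] [InnerProductSpace 𝕜 E]

lemma isCompl_orthogonal_inf_inf {K L : Submodule 𝕜 E} [(K ⊓ L).HasOrthogonalProjection]
    (h : K ⊔ L = ⊤) : IsCompl L ((K ⊓ L)ᗮ ⊓ K) := by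
  constructor
  · rw [disjoint_iff, ← (K ⊓ L).inf_orthogonal_eq_bot]
    ac_rfl
  · have hK : K ⊓ L ⊔ (K ⊓ L)ᗮ ⊓ K = K :=
      sup_orthogonal_inf_of_hasOrthogonalProjection inf_le_left
    rw [codisjoint_iff, eq_top_iff, ← h]
    refine sup_le ?_ le_sup_left
    calc K = K ⊓ L ⊔ (K ⊓ L)ᗮ ⊓ K := hK.symm
      _ ≤ L ⊔ (K ⊓ L)ᗮ ⊓ K := sup_le_sup_right inf_le_right _

lemma orthogonal_le_sup_orthogonal_of_projection [CompleteSpace E] {K L W : Submodule 𝕜 E}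
    (Q : E →L[𝕜] E) (hL : ∀ x ∈ L, Q x = x) (hK : ∀ x ∈ K, Q x ∈ W) : Wᗮ ≤ Kᗮ ⊔ Lᗮ := by
  intro z hz
  have hQz : Q.adjoint z ∈ Kᗮ := fun x hx => by
    rw [Q.adjoint_inner_right]
    exact hz _ (hK x hx)
  have hz_sub : z - Q.adjoint z ∈ Lᗮ := fun x hx => by
    rw [inner_sub_right, Q.adjoint_inner_right, hL x hx, sub_self]
  simpa using add_mem_sup hQz hz_sub

theorem orthogonal_inf_eq_sup_orthogonal [CompleteSpace E] {K L : Submodule 𝕜 E}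
    (hK : IsClosed (K : Set E)) (hL : IsClosed (L : Set E)) (h : K ⊔ L = ⊤) :
    (K ⊓ L)ᗮ = Kᗮ ⊔ Lᗮ := by
  have : CompleteSpace ↥(K ⊓ L) := (hK.inter hL).completeSpace_coe
  refine le_antisymm ?_ (sup_le (orthogonal_le inf_le_left) (orthogonal_le inf_le_right))
  have hQ := IsCompl.isTopCompl_of_isClosed (isCompl_orthogonal_inf_inf h) hL
    ((K ⊓ L).isClosed_orthogonal.inter hK)
  refine orthogonal_le_sup_orthogonal_of_projection (L.projectionL _ hQ)
    (fun x hx => projectionL_apply_left hQ ⟨x, hx⟩) fun x hx => ?_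
  rw [← sup_orthogonal_inf_of_hasOrthogonalProjection (inf_le_left : K ⊓ L ≤ K)] at hx
  obtain ⟨w, hw, y, hy, rfl⟩ := mem_sup.1 hx
  rwa [map_add, projectionL_apply_left hQ ⟨w, hw.2⟩, projectionL_apply_right hQ ⟨y, hy⟩, add_zero]

theorem sup_orthogonal_eq_orthogonal_inf_topologicalClosure [CompleteSpace E]
    {M N : Submodule 𝕜 E} (h : M ⊔ N = ⊤) :
    Mᗮ ⊔ Nᗮ = (M.topologicalClosure ⊓ N.topologicalClosure)ᗮ := by
  rw [orthogonal_inf_eq_sup_orthogonal M.isClosed_topologicalClosure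
    N.isClosed_topologicalClosure, orthogonal_closure, orthogonal_closure]
  exact eq_top_iff.2 (h ▸ sup_le_sup M.le_topologicalClosure N.le_topologicalClosure)

end Submodule

variable {X Y : Type*}
  [NormedAddCommGroup X] [InnerProductSpace ℂ X] [CompleteSpace X]
  [NormedAddCommGroup Y] [InnerProductSpace ℂ Y] [CompleteSpace Y]

theorem stmt_6 (A : X →L[ℂ] X) (B : Y →L[ℂ] X)
    (h : LinearMap.range (A : X →ₗ[ℂ] X) ⊔ LinearMap.range (B : Y →ₗ[ℂ] X) = ⊤) :
    (LinearMap.range (A : X →ₗ[ℂ] X))ᗮ ⊓ (LinearMap.range (B : Y →ₗ[ℂ] X))ᗮ = ⊥ ∧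
    IsClosed (((LinearMap.range (A : X →ₗ[ℂ] X))ᗮ ⊔ (LinearMap.range (B : Y →ₗ[ℂ] X))ᗮ : Submodule ℂ X) : Set X) ∧
    ((LinearMap.range (A : X →ₗ[ℂ] X))ᗮ ⊔ (LinearMap.range (B : Y →ₗ[ℂ] X))ᗮ)ᗮ =
      (LinearMap.range (A : X →ₗ[ℂ] X)).topologicalClosure ⊓ (LinearMap.range (B : Y →ₗ[ℂ] X)).topologicalClosure := by
  refine ⟨?_, ?_, ?_⟩
  · rw [Submodule.inf_orthogonal, h, Submodule.top_orthogonal_eq_bot]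
  · rw [Submodule.sup_orthogonal_eq_orthogonal_inf_topologicalClosure h]
    exact Submodule.isClosed_orthogonal _
  · rw [← Submodule.inf_orthogonal, Submodule.orthogonal_orthogonal_eq_closure,
      Submodule.orthogonal_orthogonal_eq_closure]
end

section
/- Let Ω₁ and Ω₂ be closed subspaces of a Hilbert space X. Then Ω₁ + Ω₂ is closed if and only if Ω₁^⊥ + Ω₂^⊥ is closed. -/
/-!
If `M + N` is closed, the addition map `M × N → M + N` is a surjection of Banach spaces, so by the
open mapping theorem, for `x ⊥ M ∩ N`, the functional `m + n ↦ ⟪x, m⟫` is well defined and bounded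
on `M + N`. Its Riesz representative `z` splits `x = (x - z) + z ∈ Mᗮ + Nᗮ`, so
`Mᗮ + Nᗮ = (M ∩ N)ᗮ` is closed. The converse is the same statement for `Mᗮ, Nᗮ`, as `Mᗮᗮ = M`.
-/

set_option synthInstance.maxHeartbeats 1000000
set_option maxHeartbeats 1000000

variable {X Y : Type*}
  [NormedAddCommGroup X] [InnerProductSpace ℂ X] [CompleteSpace X]
  [NormedAddCommGroup Y] [InnerProductSpace ℂ Y] [CompleteSpace Y]

open Function

namespace ContinuousLinearMap

variable {𝕜 E F G : Type*} [NontriviallyNormedField 𝕜]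
  [NormedAddCommGroup E] [NormedSpace 𝕜 E] [CompleteSpace E]
  [NormedAddCommGroup F] [NormedSpace 𝕜 F] [CompleteSpace F]
  [AddCommGroup G] [Module 𝕜 G] [TopologicalSpace G]

theorem exists_comp_eq_of_surjective_of_ker_le {T : E →L[𝕜] F} (hT : Surjective T)
    {g : E →L[𝕜] G} (h : T.ker ≤ g.ker) : ∃ f : F →L[𝕜] G, f.comp T = g := by
  obtain ⟨σ, hσ⟩ := (T : E →ₗ[𝕜] F).exists_rightInverse_of_surjective
    (LinearMap.range_eq_top.mpr hT)
  have hTσ (y : F) : T (σ y) = y := LinearMap.congr_fun hσ y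
  let f : F →ₗ[𝕜] G := (g : E →ₗ[𝕜] G) ∘ₗ σ
  have hfT (p : E) : f (T p) = g p := by
    have hker : σ (T p) - p ∈ T.ker := by
      rw [LinearMap.mem_ker, coe_coe, map_sub, hTσ, sub_self]
    have := h hker
    rwa [LinearMap.mem_ker, map_sub, sub_eq_zero] at this
  -- `T` is a quotient map by the open mapping theorem.
  have hf : Continuous f := (T.isQuotientMap hT).continuous_iff.mpr <| by
    simpa only [Function.comp_def, hfT] using g.continuous
  exact ⟨⟨f, hf⟩, ext hfT⟩

end ContinuousLinearMap

open scoped InnerProductSpace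

namespace Submodule

variable {𝕜 E : Type*} [RCLike 𝕜] [NormedAddCommGroup E] [InnerProductSpace 𝕜 E]
  [CompleteSpace E]

theorem orthogonal_inf_eq_sup_orthogonal_s7 {M N : Submodule 𝕜 E} (hM : IsClosed (M : Set E))
    (hN : IsClosed (N : Set E)) (hMN : IsClosed ((M ⊔ N : Submodule 𝕜 E) : Set E)) :
    (M ⊓ N)ᗮ = Mᗮ ⊔ Nᗮ := by
  refine le_antisymm ?_ (sup_le (orthogonal_le inf_le_left) (orthogonal_le inf_le_right))
  intro x hx
  set S := M ⊔ N
  have := hM.completeSpace_coe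
  have := hN.completeSpace_coe
  have := hMN.completeSpace_coe
  let T : M × N →L[𝕜] S :=
    (M.subtypeL.coprod N.subtypeL).codRestrict S fun p => add_mem_sup p.1.2 p.2.2
  have hT : Surjective T := by
    rintro ⟨s, hs⟩
    obtain ⟨m, hm, n, hn, rfl⟩ := mem_sup.mp hs
    exact ⟨(⟨m, hm⟩, ⟨n, hn⟩), rfl⟩
  let g : M × N →L[𝕜] 𝕜 := innerSL 𝕜 x ∘L M.subtypeL ∘L ContinuousLinearMap.fst 𝕜 M N
  have hker : T.ker ≤ g.ker := by
    rintro ⟨m, n⟩ hmn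
    have hmn : (m : E) + n = 0 := congrArg Subtype.val hmn
    have hm : (m : E) ∈ M ⊓ N := ⟨m.2, eq_neg_of_add_eq_zero_left hmn ▸ neg_mem n.2⟩
    exact (mem_orthogonal' _ x).mp hx _ hm
  obtain ⟨f, hf⟩ := ContinuousLinearMap.exists_comp_eq_of_surjective_of_ker_le hT hker
  let z := (InnerProductSpace.toDual 𝕜 E).symm (f ∘L S.orthogonalProjectionOnto)
  have hz (m : M) (n : N) : ⟪z, m + n⟫_𝕜 = ⟪x, m⟫_𝕜 := by
    rw [InnerProductSpace.toDual_symm_apply, ContinuousLinearMap.comp_apply,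
      S.orthogonalProjectionOnto_mem_subspace_eq_self ⟨_, add_mem_sup m.2 n.2⟩]
    exact congrArg (· (m, n)) hf
  have hxz : x - z ∈ Mᗮ := (mem_orthogonal' _ _).mpr fun m hm => by
    simpa [inner_sub_left, sub_eq_zero] using (hz ⟨m, hm⟩ 0).symm
  have hzN : z ∈ Nᗮ := (mem_orthogonal' _ _).mpr fun n hn => by
    simpa using hz 0 ⟨n, hn⟩
  simpa using add_mem_sup hxz hzN

end Submodule

theorem stmt_7 (Ω₁ Ω₂ : Submodule ℂ X) (h₁ : IsClosed (Ω₁ : Set X)) (h₂ : IsClosed (Ω₂ : Set X)) :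
    IsClosed ((Ω₁ ⊔ Ω₂ : Submodule ℂ X) : Set X) ↔
      IsClosed ((Ω₁ᗮ ⊔ Ω₂ᗮ : Submodule ℂ X) : Set X) := by
  have := h₁.completeSpace_coe
  have := h₂.completeSpace_coe
  refine ⟨fun h => ?_, fun h => ?_⟩
  · rw [← Submodule.orthogonal_inf_eq_sup_orthogonal_s7 h₁ h₂ h]
    exact Submodule.isClosed_orthogonal _
  · have hdual := Submodule.orthogonal_inf_eq_sup_orthogonal_s7
      (Submodule.isClosed_orthogonal Ω₁) (Submodule.isClosed_orthogonal Ω₂) h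
    rw [Submodule.orthogonal_orthogonal, Submodule.orthogonal_orthogonal] at hdual
    rw [← hdual]
    exact Submodule.isClosed_orthogonal _
end

section
/- Let Ω₁ and Ω₂ be closed subspaces of a Hilbert space X. Then Ω₁ + Ω₂ is closed if and only if (Ω₁ ∩ Ω₂)^⊥ = Ω₁^⊥ + Ω₂^⊥. -/
/-! If `M + N` is closed, the addition map `M × N → M + N` is a surjection of Banach spaces, hence
a quotient map by the open mapping theorem, so every continuous functional on `M × N` vanishing on
its kernel `{(k, -k) | k ∈ M ⊓ N}` factors through it. For `x ⊥ M ⊓ N`, factoring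
`(m, n) ↦ ⟪x, m⟫` and applying the Riesz representation gives `y` with `⟪y, m + n⟫ = ⟪x, m⟫`,
i.e. `y ∈ Nᗮ` and `x - y ∈ Mᗮ`; thus `Mᗮ ⊔ Nᗮ = (M ⊓ N)ᗮ`. Conversely, if this holds then
`Mᗮ ⊔ Nᗮ` is closed, and the same argument for `Mᗮ, Nᗮ` shows `M ⊔ N = (Mᗮ ⊓ Nᗮ)ᗮ`. -/

namespace ContinuousLinearMap

section

variable {𝕜 E F G : Type*} [NontriviallyNormedField 𝕜]
  [NormedAddCommGroup E] [NormedSpace 𝕜 E] [CompleteSpace E]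
  [NormedAddCommGroup F] [NormedSpace 𝕜 F] [CompleteSpace F]
  [AddCommGroup G] [Module 𝕜 G] [TopologicalSpace G]

theorem exists_comp_eq_of_surjective_of_ker_le_s8 (A : E →L[𝕜] F) (hA : Function.Surjective A)
    (g : E →L[𝕜] G) (hg : A.ker ≤ g.ker) : ∃ f : F →L[𝕜] G, f ∘L A = g := by
  let f : F →ₗ[𝕜] G := A.ker.liftQ g hg ∘ₗ (A.toLinearMap.quotKerEquivOfSurjective hA).symm
  have hfA : ∀ z, f (A z) = g z := fun z => by simp [f, ← coe_coe]
  have hf : Continuous f := (A.isQuotientMap hA).continuous_iff.2 <| by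
    simpa only [Function.comp_def, hfA] using g.continuous
  exact ⟨⟨f, hf⟩, ext hfA⟩

end

variable {𝕜 E F : Type*} [RCLike 𝕜]
  [NormedAddCommGroup E] [NormedSpace 𝕜 E] [CompleteSpace E]
  [NormedAddCommGroup F] [InnerProductSpace 𝕜 F] [CompleteSpace F]

theorem exists_innerSL_comp_eq_of_isClosed_range (T : E →L[𝕜] F)
    (hT : IsClosed (T.range : Set F)) (g : E →L[𝕜] 𝕜) (hg : T.ker ≤ g.ker) :
    ∃ y : F, innerSL 𝕜 y ∘L T = g := by
  have : CompleteSpace T.range := hT.completeSpace_coe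
  obtain ⟨f, hf⟩ := T.rangeRestrict.exists_comp_eq_of_surjective_of_ker_le_s8
    T.toLinearMap.surjective_rangeRestrict g (by simpa using hg)
  refine ⟨(InnerProductSpace.toDual 𝕜 T.range).symm f, ext fun z => ?_⟩
  rw [← hf]
  exact InnerProductSpace.toDual_symm_apply (x := T.rangeRestrict z)

end ContinuousLinearMap

namespace Submodule

variable {𝕜 E : Type*} [RCLike 𝕜] [NormedAddCommGroup E] [InnerProductSpace 𝕜 E] [CompleteSpace E]

theorem orthogonal_inf_le_sup_orthogonal {M N : Submodule 𝕜 E} (hM : IsClosed (M : Set E))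
    (hN : IsClosed (N : Set E)) (hMN : IsClosed ((M ⊔ N : Submodule 𝕜 E) : Set E)) :
    (M ⊓ N)ᗮ ≤ Mᗮ ⊔ Nᗮ := by
  intro x hx
  have : CompleteSpace M := hM.completeSpace_coe
  have : CompleteSpace N := hN.completeSpace_coe
  let T : M × N →L[𝕜] E := M.subtypeL.coprod N.subtypeL
  have hT : T.range = M ⊔ N := by simp [T, LinearMap.range_coprod]
  obtain ⟨y, hy⟩ := T.exists_innerSL_comp_eq_of_isClosed_range (hT ▸ hMN)
    (innerSL 𝕜 x ∘L M.subtypeL ∘L ContinuousLinearMap.fst 𝕜 M N) <| by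
      rintro ⟨⟨m, hm⟩, ⟨n, hn⟩⟩ hker
      have hmn : m + n = 0 := hker
      have hmN : m ∈ N := by simpa [eq_neg_of_add_eq_zero_left hmn] using hn
      exact (mem_orthogonal' _ x).1 hx m ⟨hm, hmN⟩
  have hy : ∀ m ∈ M, ∀ n ∈ N, inner 𝕜 y (m + n) = inner 𝕜 x m := fun m hm n hn =>
    congr($hy (⟨m, hm⟩, ⟨n, hn⟩))
  have hyN : y ∈ Nᗮ := (mem_orthogonal' _ y).2 fun n hn => by
    simpa using hy 0 M.zero_mem n hn
  have hxyM : x - y ∈ Mᗮ := (mem_orthogonal' _ _).2 fun m hm => by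
    simpa [inner_sub_left, sub_eq_zero] using (hy m hm 0 N.zero_mem).symm
  simpa using add_mem_sup hxyM hyN

theorem sup_orthogonal_eq_orthogonal_inf {M N : Submodule 𝕜 E} (hM : IsClosed (M : Set E))
    (hN : IsClosed (N : Set E)) (hMN : IsClosed ((M ⊔ N : Submodule 𝕜 E) : Set E)) :
    Mᗮ ⊔ Nᗮ = (M ⊓ N)ᗮ :=
  le_antisymm (sup_le (orthogonal_le inf_le_left) (orthogonal_le inf_le_right))
    (orthogonal_inf_le_sup_orthogonal hM hN hMN)

end Submodule

open Submodule

variable {X Y : Type*}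
  [NormedAddCommGroup X] [InnerProductSpace ℂ X] [CompleteSpace X]
  [NormedAddCommGroup Y] [InnerProductSpace ℂ Y] [CompleteSpace Y]

theorem stmt_8 (Ω₁ Ω₂ : Submodule ℂ X) (h₁ : IsClosed (Ω₁ : Set X)) (h₂ : IsClosed (Ω₂ : Set X)) :
    IsClosed ((Ω₁ ⊔ Ω₂ : Submodule ℂ X) : Set X) ↔ (Ω₁ ⊓ Ω₂)ᗮ = Ω₁ᗮ ⊔ Ω₂ᗮ := by
  refine ⟨fun h => (sup_orthogonal_eq_orthogonal_inf h₁ h₂ h).symm, fun h => ?_⟩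
  have hclosed : IsClosed ((Ω₁ᗮ ⊔ Ω₂ᗮ : Submodule ℂ X) : Set X) := h ▸ isClosed_orthogonal _
  have hsup := sup_orthogonal_eq_orthogonal_inf (isClosed_orthogonal Ω₁) (isClosed_orthogonal Ω₂)
    hclosed
  rw [orthogonal_orthogonal_eq_closure, orthogonal_orthogonal_eq_closure,
    h₁.submodule_topologicalClosure_eq, h₂.submodule_topologicalClosure_eq,
    inf_orthogonal] at hsup
  exact hsup ▸ isClosed_orthogonal _
end

section
/- Let A ∈ B(X), B ∈ B(Y,X), C ∈ B(X,Y), D ∈ B(Y). If Y ≠ {0} and the kernel of the row operator (A B) is trivial, then the operator matrix M = [[A, B],[C, D]] : X ⊕ Y → X ⊕ Y is not an isomorphism. -/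
set_option synthInstance.maxHeartbeats 1000000
set_option maxHeartbeats 1000000

variable {X Y : Type*}
  [NormedAddCommGroup X] [InnerProductSpace ℂ X] [CompleteSpace X]
  [NormedAddCommGroup Y] [InnerProductSpace ℂ Y] [CompleteSpace Y]

theorem LinearMap.subsingleton_of_surjective_prod_of_injective {R M N₁ N₂ : Type*} [Semiring R]
    [AddCommMonoid M] [AddCommMonoid N₁] [AddCommMonoid N₂] [Module R M] [Module R N₁]
    [Module R N₂] {f : M →ₗ[R] N₁} {g : M →ₗ[R] N₂} (hsurj : Function.Surjective (f.prod g))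
    (hf : Function.Injective f) : Subsingleton N₂ := by
  refine subsingleton_of_forall_eq 0 fun y => ?_
  obtain ⟨x, hx⟩ := hsurj (0, y)
  have hx0 : x = 0 := hf (by simpa using congrArg Prod.fst hx)
  simpa [hx0] using (congrArg Prod.snd hx).symm

theorem stmt_16 (A : X →L[ℂ] X) (B : Y →L[ℂ] X) (C : X →L[ℂ] Y) (D : Y →L[ℂ] Y)
    (hY : ∃ y : Y, y ≠ 0) (hker : LinearMap.ker ((A.coprod B : X × Y →L[ℂ] X) : X × Y →ₗ[ℂ] X) = ⊥) :
    ¬∃ e : (X × Y) ≃L[ℂ] (X × Y),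
        (e : X × Y →L[ℂ] X × Y) = (A.coprod B).prod (C.coprod D) := by
  rintro ⟨e, he⟩
  have hsurj : Function.Surjective
      (((A.coprod B : X × Y →L[ℂ] X) : X × Y →ₗ[ℂ] X).prod (C.coprod D : X × Y →ₗ[ℂ] Y)) := by
    convert e.surjective using 1
    rw [← ContinuousLinearEquiv.coe_coe, he]
    rfl
  have hY0 := LinearMap.subsingleton_of_surjective_prod_of_injective hsurj
    (LinearMap.ker_eq_bot.mp hker)
  obtain ⟨y, hy⟩ := hY
  exact hy (Subsingleton.elim y 0)
end
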